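/- arXiv:1411.1459 — 2 statements merged into one kernel-verified Lean document; each statement's English description precedes it below -/
import Mathlib

section
/- If J* ≥ 0, then for every ε > 0 there exists an ε-optimal nonrandomized Markov policy (i.e., a nonrandomized Markov policy π with J_π(x) ≤ J*(x) + ε for all x ∈ S); if in addition for every state x there exists a policy π with J_π(x) = J*(x), then there exists a nonrandomized stationary policy μ with J_μ = J*. -/
/-!
Common framework: countable-state/countable-control total-cost MDPs under the
General Convergence (GC) condition, following H. Yu, "On Convergence of Value
Iteration for a Class of Total Cost Markov Decision Processes".

States `S` and controls `C` are countable types; `U x` is the nonempty set of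
feasible controls at `x`; `g x u ∈ (-∞, +∞]` is the one-stage cost (an `EReal`
that is never `⊥` on feasible pairs); `q x u x'` are transition probabilities.

A policy is represented by its conditional control distributions given the
(reversed) history of past (state, control) pairs and the current state.
Expectations are computed by explicit countable sums, splitting every
extended-real quantity into its positive and negative parts (computed in
`ℝ≥0∞`) and recombining with the convention `∞ - ∞ = ∞`.
-/

open scoped ENNReal Classical
open Filter

noncomputable section

namespace GCMDP

/-- The positive part of an extended real, as an element of `ℝ≥0∞`. -/
def ePos (a : EReal) : ℝ≥0∞ := if a = ⊤ then ⊤ else ENNReal.ofReal a.toReal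

/-- Recombine a positive part `P` and a negative part `N` into an extended real,
with the convention `∞ - ∞ = ∞`. -/
def signedSum (P N : ℝ≥0∞) : EReal := if P = ⊤ then ⊤ else (P : EReal) - (N : EReal)

variable {S C : Type}

/-- A (randomized, history-dependent) policy: to each reversed list of past
(state, control) pairs and each current state it assigns a mass function on
controls. -/
def Policy (S C : Type) : Type := List (S × C) → S → C → ℝ≥0∞

/-- A policy is valid for the control constraint `U` if each of its conditional
distributions is a probability distribution concentrated on the feasible set. -/
def IsPolicy (U : S → Set C) (π : Policy S C) : Prop :=
  ∀ (h : List (S × C)) (x : S), (∑' u : C, π h x u) = 1 ∧ ∀ u : C, π h x u ≠ 0 → u ∈ U x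

/-- A policy is nonrandomized if each of its conditional distributions is a
point mass. -/
def Nonrandomized (π : Policy S C) : Prop :=
  ∀ (h : List (S × C)) (x : S), ∃ u : C, ∀ u' : C, π h x u' = if u' = u then 1 else 0

/-- The initial state recorded in a reversed history `h` with current state `x`. -/
def initOf (h : List (S × C)) (x : S) : S := ((h.getLast?).map Prod.fst).getD x

/-- A policy is semi-Markov if its decision at time `k` depends on the history
only through the time `k`, the initial state and the current state. -/
def IsSemiMarkov (π : Policy S C) : Prop :=
  ∀ (h h' : List (S × C)) (x : S), h.length = h'.length → initOf h x = initOf h' x →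
    π h x = π h' x

/-- A policy is Markov if its decision at time `k` depends on the history only
through the time `k` and the current state. -/
def IsMarkov (π : Policy S C) : Prop :=
  ∀ (h h' : List (S × C)) (x : S), h.length = h'.length → π h x = π h' x

/-- A policy is stationary if its decision depends only on the current state. -/
def IsStationary (π : Policy S C) : Prop :=
  ∀ (h h' : List (S × C)) (x : S), π h x = π h' x

/-- The stationary policy determined by a one-step decision rule `μ`. -/
def toPolicy (μ : S → C → ℝ≥0∞) : Policy S C := fun _ x u => μ x u

/-- Probability that, starting from `x₀` and following policy `π`, the first
transitions produce the reversed history `h` and current state `y`. -/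
def histProb (q : S → C → S → ℝ≥0∞) (π : Policy S C) (x₀ : S) :
    List (S × C) → S → ℝ≥0∞
  | [], y => if y = x₀ then 1 else 0
  | (z, u) :: h, y => histProb q π x₀ h z * π h z u * q z u y

/-- Marginal distribution of the state `x_n` at time `n` under policy `π`
started at `x₀`. -/
def sDist (q : S → C → S → ℝ≥0∞) (π : Policy S C) (x₀ : S) (n : ℕ) (y : S) : ℝ≥0∞ :=
  ∑' h : {l : List (S × C) // l.length = n}, histProb q π x₀ h.1 y

/-- Joint distribution of the state-control pair `(x_n, u_n)` at time `n`. -/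
def saDist (q : S → C → S → ℝ≥0∞) (π : Policy S C) (x₀ : S) (n : ℕ) (y : S) (u : C) : ℝ≥0∞ :=
  ∑' h : {l : List (S × C) // l.length = n}, histProb q π x₀ h.1 y * π h.1 y u

/-- Expectation `E^π_{x₀}[f(x_n, u_n)]` of a nonnegative cost. -/
def costAt (q : S → C → S → ℝ≥0∞) (π : Policy S C) (x₀ : S) (n : ℕ)
    (f : S → C → ℝ≥0∞) : ℝ≥0∞ :=
  ∑' y : S, ∑' u : C, saDist q π x₀ n y u * f y u

/-- Positive part `g₊` of the one-stage cost. -/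
def gPos (g : S → C → EReal) (x : S) (u : C) : ℝ≥0∞ := ePos (g x u)

/-- Negative part `g₋` of the one-stage cost. -/
def gNeg (g : S → C → EReal) (x : S) (u : C) : ℝ≥0∞ := ePos (-(g x u))

/-- `J_π^+(x) = E^π_x[∑_k g₊(x_k,u_k)]`. -/
def Jplus (q : S → C → S → ℝ≥0∞) (g : S → C → EReal) (π : Policy S C) (x : S) : ℝ≥0∞ :=
  ∑' n : ℕ, costAt q π x n (gPos g)

/-- `J_π^-(x) = E^π_x[∑_k g₋(x_k,u_k)]`. -/
def Jminus (q : S → C → S → ℝ≥0∞) (g : S → C → EReal) (π : Policy S C) (x : S) : ℝ≥0∞ :=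
  ∑' n : ℕ, costAt q π x n (gNeg g)

/-- The total cost `J_π(x) = J_π^+(x) - J_π^-(x)` of a policy. -/
def Jpol (q : S → C → S → ℝ≥0∞) (g : S → C → EReal) (π : Policy S C) (x : S) : EReal :=
  signedSum (Jplus q g π x) (Jminus q g π x)

/-- The general convergence (GC) condition: `sup_π J_π^-(x) < ∞` for all `x`. -/
def GC (U : S → Set C) (q : S → C → S → ℝ≥0∞) (g : S → C → EReal) : Prop :=
  ∀ x : S, (⨆ π ∈ {π' : Policy S C | IsPolicy U π'}, Jminus q g π x) ≠ ⊤

/-- The optimal cost function `J*(x) = inf_π J_π(x)`. -/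
def Jstar (U : S → Set C) (q : S → C → S → ℝ≥0∞) (g : S → C → EReal) (x : S) : EReal :=
  ⨅ π ∈ {π' : Policy S C | IsPolicy U π'}, Jpol q g π x

/-- `J^{*+}(x) = inf_π J_π^+(x)`. -/
def JstarPlus (U : S → Set C) (q : S → C → S → ℝ≥0∞) (g : S → C → EReal) (x : S) : ℝ≥0∞ :=
  ⨅ π ∈ {π' : Policy S C | IsPolicy U π'}, Jplus q g π x

/-- `J^{*-}(x) = inf_π J_π^-(x)`. -/
def JstarMinus (U : S → Set C) (q : S → C → S → ℝ≥0∞) (g : S → C → EReal) (x : S) : ℝ≥0∞ :=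
  ⨅ π ∈ {π' : Policy S C | IsPolicy U π'}, Jminus q g π x

/-- The general one-stage dynamic programming operator with one-stage cost `c`:
`(opT c J)(x) = inf_{u ∈ U(x)} { c(x,u) + ∑_{x'} J(x') q(x'|x,u) }`, where the
bracket is evaluated by separating positive and negative parts, with the
convention `∞ - ∞ = ∞`. -/
def opT (U : S → Set C) (q : S → C → S → ℝ≥0∞) (c : S → C → EReal)
    (J : S → EReal) (x : S) : EReal :=
  ⨅ u ∈ U x,
    signedSum (ePos (c x u) + ∑' x' : S, q x u x' * ePos (J x'))
      (ePos (-(c x u)) + ∑' x' : S, q x u x' * ePos (-(J x')))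

/-- The dynamic programming operator `T` of the total cost problem. -/
def Top (U : S → Set C) (q : S → C → S → ℝ≥0∞) (g : S → C → EReal) :
    (S → EReal) → S → EReal :=
  opT U q g

/-- The operator `T₊` associated with the positive part `g₊` of the cost. -/
def TopPlus (U : S → Set C) (q : S → C → S → ℝ≥0∞) (g : S → C → EReal) :
    (S → EReal) → S → EReal :=
  opT U q (fun x u => max (g x u) 0)

/-- The operator `T₋` associated with the (negated) negative part `-g₋` of the cost. -/
def TopMinus (U : S → Set C) (q : S → C → S → ℝ≥0∞) (g : S → C → EReal) :
    (S → EReal) → S → EReal :=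
  opT U q (fun x u => min (g x u) 0)

/-- The cost-free operator `T₀`. -/
def TopZero (U : S → Set C) (q : S → C → S → ℝ≥0∞) :
    (S → EReal) → S → EReal :=
  opT U q (fun _ _ => 0)

/-- The monotone-increasing modification `T̃(J) = max{J, T(J)}` of `T`. -/
def Ttil (U : S → Set C) (q : S → C → S → ℝ≥0∞) (g : S → C → EReal)
    (J : S → EReal) (x : S) : EReal :=
  max (J x) (Top U q g J x)

/-- The operator `T_μ` associated with a stationary decision rule `μ`. -/
def Tmu (q : S → C → S → ℝ≥0∞) (g : S → C → EReal) (μ : S → C → ℝ≥0∞)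
    (J : S → EReal) (x : S) : EReal :=
  signedSum (∑' u : C, μ x u * (ePos (g x u) + ∑' x' : S, q x u x' * ePos (J x')))
    (∑' u : C, μ x u * (ePos (-(g x u)) + ∑' x' : S, q x u x' * ePos (-(J x'))))

/-- Expectation `E^π_{x₀}[J(x_n)]` of an extended-real function of the state at
time `n` (positive and negative parts combined with the convention `∞-∞=∞`). -/
def expState (q : S → C → S → ℝ≥0∞) (π : Policy S C) (x₀ : S) (n : ℕ)
    (J : S → EReal) : EReal :=
  signedSum (∑' y : S, sDist q π x₀ n y * ePos (J y))
    (∑' y : S, sDist q π x₀ n y * ePos (-(J y)))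

/-- The expected tail cost `E^π_{x₀}[∑_{k ≥ n} g(x_k, u_k)]`. -/
def tailCost (q : S → C → S → ℝ≥0∞) (g : S → C → EReal) (π : Policy S C)
    (x₀ : S) (n : ℕ) : EReal :=
  signedSum (∑' k : ℕ, costAt q π x₀ (n + k) (gPos g))
    (∑' k : ℕ, costAt q π x₀ (n + k) (gNeg g))

/-- Membership in the class `A₀(S)`: functions nowhere `-∞` such that
`inf_{n ≥ 1} T₀ⁿ(min{J, 0})` is nowhere `-∞`. -/
def MemA0 (U : S → Set C) (q : S → C → S → ℝ≥0∞) (J : S → EReal) : Prop :=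
  (∀ x : S, J x ≠ ⊥) ∧
    ∀ x : S, (⨅ n : ℕ, (TopZero U q)^[n + 1] (fun y => min (J y) 0) x) ≠ ⊥

open scoped NNReal

/-!
Since `J* ≥ 0`, it is the `ℝ≥0∞`-valued function `V = ePos ∘ J*`, and every policy satisfies
`V + J⁻_π ≤ J⁺_π`. Splitting a near-optimal (or optimal) policy at its first step and applying
this bound to its continuation policies shows that at every state some feasible control `u` is
`δ`-conserving: `g₊(x,u) + E[V(x₁)] ≤ V(x) + g₋(x,u) + δ`, and `δ = 0` is allowed when `J*(x)` is
attained. A Markov policy using `δ_k`-conserving controls at time `k` telescopes to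
`J⁺ ≤ V + J⁻ + ∑ δ_k`, that is `J_π ≤ J* + ∑ δ_k`.
-/

lemma ePos_eq_toENNReal : ePos = EReal.toENNReal := rfl

lemma signedSum_le_coe_iff {P N A : ℝ≥0∞} (hN : N ≠ ⊤) :
    signedSum P N ≤ A ↔ P ≤ A + N := by
  unfold signedSum
  split_ifs with hP
  · simp [hP, hN]
  · rw [EReal.sub_le_iff_le_add (.inl (EReal.coe_ennreal_ne_bot N))
      (.inl (by simpa using hN)), ← EReal.coe_ennreal_add,
      EReal.coe_ennreal_le_coe_ennreal_iff]

lemma coe_le_signedSum_iff {P N A : ℝ≥0∞} (hN : N ≠ ⊤) :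
    (A : EReal) ≤ signedSum P N ↔ A + N ≤ P := by
  unfold signedSum
  split_ifs with hP
  · simp [hP]
  · rw [EReal.le_sub_iff_add_le (.inl (EReal.coe_ennreal_ne_bot N))
      (.inl (by simpa using hN)), ← EReal.coe_ennreal_add,
      EReal.coe_ennreal_le_coe_ennreal_iff]

lemma exists_le_of_tsum_mul_le_tsum_mul {ι : Type*} {p a b : ι → ℝ≥0∞}
    (hp : ∑' i, p i = 1) (hb : ∑' i, p i * b i ≠ ⊤)
    (hab : ∑' i, p i * a i ≤ ∑' i, p i * b i) : ∃ i, p i ≠ 0 ∧ b i ≠ ⊤ ∧ a i ≤ b i := by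
  have hb_fin : ∀ i, p i ≠ 0 → b i ≠ ⊤ := fun i hi hbi =>
    hb (top_unique ((ENNReal.mul_top hi).symm.trans_le (hbi ▸ ENNReal.le_tsum i)))
  by_contra! h
  obtain ⟨i, hi⟩ : ∃ i, p i ≠ 0 := by
    by_contra! h0
    simp [h0] at hp
  have hpi : p i ≠ ⊤ := ne_top_of_le_ne_top ENNReal.one_ne_top (hp ▸ ENNReal.le_tsum i)
  refine (ENNReal.tsum_lt_tsum (i := i) hb (fun j => ?_) ?_).not_ge hab
  · rcases eq_or_ne (p j) 0 with h0 | h0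
    · simp [h0]
    · exact mul_le_mul_right (h j h0 (hb_fin j h0)).le _
  · exact (ENNReal.mul_lt_mul_iff_right hi hpi).2 (h i hi (hb_fin i hi))

section History

variable {q : S → C → S → ℝ≥0∞} {π : Policy S C}

/-- Continuation of `π` after a first step `(z, u)`: histories are stored most recent first, so
that step is appended at the end. -/
def shift (π : Policy S C) (z : S) (u : C) : Policy S C := fun h => π (h ++ [(z, u)])

lemma isPolicy_shift {U : S → Set C} (hπ : IsPolicy U π) (z : S) (u : C) :
    IsPolicy U (shift π z u) :=
  fun h x => hπ (h ++ [(z, u)]) x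

lemma histProb_append_singleton (x₀ z : S) (u : C) (l : List (S × C)) (y : S) :
    histProb q π x₀ (l ++ [(z, u)]) y
      = (if z = x₀ then 1 else 0) * π [] z u *
          ∑' w, q z u w * histProb q (shift π z u) w l y := by
  induction l generalizing y with
  | nil =>
    rw [tsum_eq_single y fun w hw => by simp [histProb, Ne.symm hw]]
    simp [histProb]
  | cons p t ih =>
    obtain ⟨a, b⟩ := p
    simp only [List.cons_append, histProb, ih, ← ENNReal.tsum_mul_right, ← ENNReal.tsum_mul_left]
    refine tsum_congr fun w => ?_
    simp only [shift]
    ring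

def lengthSuccEquivCons (α : Type*) (n : ℕ) :
    {l : List α // l.length = n + 1} ≃ α × {l : List α // l.length = n} where
  toFun l := (l.1.head (List.ne_nil_of_length_eq_add_one l.2), ⟨l.1.tail, by simp [l.2]⟩)
  invFun p := ⟨p.1 :: p.2.1, by simp [p.2.2]⟩
  left_inv l := Subtype.ext (List.cons_head_tail _)
  right_inv p := by simp

def lengthSuccEquivConcat (α : Type*) (n : ℕ) :
    {l : List α // l.length = n + 1} ≃ α × {l : List α // l.length = n} where
  toFun l := (l.1.getLast (List.ne_nil_of_length_eq_add_one l.2), ⟨l.1.dropLast, by simp [l.2]⟩)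
  invFun p := ⟨p.2.1 ++ [p.1], by simp [p.2.2]⟩
  left_inv l := Subtype.ext (List.dropLast_append_getLast _)
  right_inv p := by ext <;> simp

lemma tsum_length_zero {α : Type*} (f : List α → ℝ≥0∞) :
    ∑' l : {l : List α // l.length = 0}, f l.1 = f [] :=
  tsum_eq_single (⟨[], rfl⟩ : {l : List α // l.length = 0}) fun l hl => absurd (Subtype.ext (List.length_eq_zero_iff.1 l.2)) hl

lemma tsum_length_succ_cons {α : Type*} {n : ℕ} (f : List α → ℝ≥0∞) :
    ∑' l : {l : List α // l.length = n + 1}, f l.1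
      = ∑' a : α, ∑' t : {l : List α // l.length = n}, f (a :: t.1) := by
  rw [← (lengthSuccEquivCons α n).symm.tsum_eq, ENNReal.tsum_prod']
  rfl

lemma tsum_length_succ_concat {α : Type*} {n : ℕ} (f : List α → ℝ≥0∞) :
    ∑' l : {l : List α // l.length = n + 1}, f l.1
      = ∑' a : α, ∑' t : {l : List α // l.length = n}, f (t.1 ++ [a]) := by
  rw [← (lengthSuccEquivConcat α n).symm.tsum_eq, ENNReal.tsum_prod']
  rfl

lemma sDist_zero (x y : S) : sDist q π x 0 y = if y = x then 1 else 0 :=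
  tsum_length_zero (fun l => histProb q π x l y)

lemma saDist_zero (x y : S) (u : C) :
    saDist q π x 0 y u = (if y = x then 1 else 0) * π [] y u :=
  tsum_length_zero (fun l => histProb q π x l y * π l y u)

lemma sDist_succ (x : S) (n : ℕ) (y : S) :
    sDist q π x (n + 1) y = ∑' p : S × C, saDist q π x n p.1 p.2 * q p.1 p.2 y := by
  rw [sDist, tsum_length_succ_cons (fun l => histProb q π x l y)]
  refine tsum_congr fun p => ?_
  rw [saDist, ← ENNReal.tsum_mul_right]
  rfl

lemma saDist_succ (x : S) (n : ℕ) (y : S) (v : C) :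
    saDist q π x (n + 1) y v
      = ∑' u, π [] x u * ∑' w, q x u w * saDist q (shift π x u) w n y v := by
  rw [saDist, tsum_length_succ_concat (fun l => histProb q π x l y * π l y v), ENNReal.tsum_prod',
    tsum_eq_single x fun z hz => by simp [histProb_append_singleton, hz]]
  refine tsum_congr fun u => ?_
  simp only [histProb_append_singleton, if_true, one_mul, saDist, ← ENNReal.tsum_mul_left,
    ← ENNReal.tsum_mul_right]
  rw [ENNReal.tsum_comm]
  refine tsum_congr fun w => tsum_congr fun t => ?_
  simp only [shift]
  ring

lemma costAt_zero (x : S) (c : S → C → ℝ≥0∞) :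
    costAt q π x 0 c = ∑' u, π [] x u * c x u := by
  rw [costAt, tsum_eq_single x fun y hy => by simp [saDist_zero, hy]]
  simp [saDist_zero]

lemma costAt_succ (x : S) (n : ℕ) (c : S → C → ℝ≥0∞) :
    costAt q π x (n + 1) c
      = ∑' u, π [] x u * ∑' w, q x u w * costAt q (shift π x u) w n c := by
  simp only [costAt, saDist_succ, ← ENNReal.tsum_mul_left, ← ENNReal.tsum_mul_right, mul_assoc]
  calc _ = ∑' y, ∑' u, ∑' v, ∑' w, π [] x u * (q x u w * (saDist q (shift π x u) w n y v * c y v)) :=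
        tsum_congr fun y => ENNReal.tsum_comm
    _ = ∑' u, ∑' y, ∑' w, ∑' v, π [] x u * (q x u w * (saDist q (shift π x u) w n y v * c y v)) := by
        rw [ENNReal.tsum_comm]
        exact tsum_congr fun u => tsum_congr fun y => ENNReal.tsum_comm
    _ = _ := tsum_congr fun u => ENNReal.tsum_comm

lemma tsum_costAt_eq (x : S) (c : S → C → ℝ≥0∞) :
    ∑' n, costAt q π x n c
      = ∑' u, π [] x u * (c x u + ∑' w, q x u w * ∑' n, costAt q (shift π x u) w n c) := by
  have hsucc : ∑' n, costAt q π x (n + 1) c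
      = ∑' u, π [] x u * ∑' w, q x u w * ∑' n, costAt q (shift π x u) w n c := by
    simp only [costAt_succ, ← ENNReal.tsum_mul_left]
    rw [ENNReal.tsum_comm]
    exact tsum_congr fun u => ENNReal.tsum_comm
  rw [tsum_eq_zero_add' ENNReal.summable, costAt_zero, hsucc, ← ENNReal.tsum_add]
  exact tsum_congr fun u => (mul_add _ _ _).symm

end History

section OptimalCost

variable {U : S → Set C} {q : S → C → S → ℝ≥0∞} {g : S → C → EReal}
  {π : Policy S C}

lemma Jplus_eq_tsum_shift (x : S) :
    Jplus q g π x
      = ∑' u, π [] x u * (gPos g x u + ∑' w, q x u w * Jplus q g (shift π x u) w) :=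
  tsum_costAt_eq x _

lemma Jminus_eq_tsum_shift (x : S) :
    Jminus q g π x
      = ∑' u, π [] x u * (gNeg g x u + ∑' w, q x u w * Jminus q g (shift π x u) w) :=
  tsum_costAt_eq x _

lemma Jminus_ne_top (hGC : GC U q g) (hπ : IsPolicy U π) (x : S) : Jminus q g π x ≠ ⊤ :=
  ne_top_of_le_ne_top (hGC x)
    (le_iSup₂ (f := fun π' (_ : π' ∈ {π' | IsPolicy U π'}) => Jminus q g π' x) π hπ)

lemma Jstar_le_Jpol (hπ : IsPolicy U π) (x : S) : Jstar U q g x ≤ Jpol q g π x :=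
  iInf₂_le (f := fun π' (_ : π' ∈ {π' | IsPolicy U π'}) => Jpol q g π' x) π hπ

lemma ePos_Jstar_add_Jminus_le_Jplus (hGC : GC U q g) (hpos : ∀ x, 0 ≤ Jstar U q g x)
    (hπ : IsPolicy U π) (x : S) :
    ePos (Jstar U q g x) + Jminus q g π x ≤ Jplus q g π x := by
  rw [← coe_le_signedSum_iff (Jminus_ne_top hGC hπ x), ePos_eq_toENNReal,
    EReal.coe_toENNReal (hpos x)]
  exact Jstar_le_Jpol hπ x

lemma exists_isPolicy_Jpol_le (hpos : ∀ x, 0 ≤ Jstar U q g x) {x : S} {δ : ℝ≥0}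
    (hex : δ = 0 → ∃ π, IsPolicy U π ∧ Jpol q g π x = Jstar U q g x)
    (hx : Jstar U q g x ≠ ⊤) :
    ∃ π, IsPolicy U π ∧ Jpol q g π x ≤ ((ePos (Jstar U q g x) + δ : ℝ≥0∞) : EReal) := by
  have hJ : (ePos (Jstar U q g x) : EReal) = Jstar U q g x := EReal.coe_toENNReal (hpos x)
  rcases eq_or_ne δ 0 with rfl | hδ
  · obtain ⟨π, hπ, hopt⟩ := hex rfl
    exact ⟨π, hπ, by rw [ENNReal.coe_zero, add_zero, hJ, hopt]⟩
  have hlt : Jstar U q g x < ((ePos (Jstar U q g x) + δ : ℝ≥0∞) : EReal) :=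
    calc Jstar U q g x = (ePos (Jstar U q g x) : EReal) := hJ.symm
      _ < _ := EReal.coe_ennreal_lt_coe_ennreal_iff.2 <| ENNReal.lt_add_right
        (by rwa [Ne, ePos_eq_toENNReal, EReal.toENNReal_eq_top_iff]) (by simpa using hδ)
  simp only [Jstar, iInf_lt_iff] at hlt
  obtain ⟨π, hπ, hπx⟩ := hlt
  exact ⟨π, hπ, hπx.le⟩

theorem exists_conserving_control (hU : ∀ x, (U x).Nonempty) (hGC : GC U q g)
    (hpos : ∀ x, 0 ≤ Jstar U q g x) (x : S) {δ : ℝ≥0}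
    (hex : δ = 0 → ∃ π, IsPolicy U π ∧ Jpol q g π x = Jstar U q g x) :
    ∃ u ∈ U x, gPos g x u + ∑' w, q x u w * ePos (Jstar U q g w)
      ≤ ePos (Jstar U q g x) + gNeg g x u + δ := by
  rcases eq_or_ne (Jstar U q g x) ⊤ with hx | hx
  · obtain ⟨u, hu⟩ := hU x
    exact ⟨u, hu, by simp [hx, ePos]⟩
  obtain ⟨π, hπ, hπx⟩ := exists_isPolicy_Jpol_le hpos hex hx
  have hJM := Jminus_ne_top hGC hπ x
  set K : C → ℝ≥0∞ := fun u => ∑' w, q x u w * Jminus q g (shift π x u) w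
  have hplus : ∑' u, π [] x u * (gPos g x u + ∑' w, q x u w * ePos (Jstar U q g w) + K u)
      ≤ Jplus q g π x := by
    rw [Jplus_eq_tsum_shift]
    refine ENNReal.tsum_le_tsum fun u => ?_
    simp only [K, add_assoc, ← ENNReal.tsum_add, ← mul_add]
    gcongr with w
    exact ePos_Jstar_add_Jminus_le_Jplus hGC hpos (isPolicy_shift hπ x u) w
  have hminus : ∑' u, π [] x u * (ePos (Jstar U q g x) + gNeg g x u + δ + K u)
      = ePos (Jstar U q g x) + δ + Jminus q g π x := by
    rw [Jminus_eq_tsum_shift]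
    calc _ = ∑' u, (π [] x u * (ePos (Jstar U q g x) + δ) + π [] x u * (gNeg g x u + K u)) :=
          tsum_congr fun u => by ring
      _ = _ := by rw [ENNReal.tsum_add, ENNReal.tsum_mul_right, (hπ [] x).1, one_mul]
  have hfin : ePos (Jstar U q g x) + δ + Jminus q g π x ≠ ⊤ := by
    simp [ePos_eq_toENNReal, hx, hJM]
  obtain ⟨u, hu, hfin_u, hle⟩ := exists_le_of_tsum_mul_le_tsum_mul (hπ [] x).1 (hminus ▸ hfin)
    (hminus ▸ hplus.trans ((signedSum_le_coe_iff hJM).1 hπx))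
  exact ⟨u, (hπ [] x).2 u hu, ENNReal.le_of_add_le_add_right (ENNReal.add_ne_top.1 hfin_u).2 hle⟩

end OptimalCost

section Markov

variable {U : S → Set C} {q : S → C → S → ℝ≥0∞} {g : S → C → EReal}
  {f : ℕ → S → C}

def markovPolicy (f : ℕ → S → C) : Policy S C := fun h y v => if v = f h.length y then 1 else 0

lemma isPolicy_markovPolicy (hf : ∀ k x, f k x ∈ U x) : IsPolicy U (markovPolicy f) :=
  fun h x => ⟨tsum_ite_eq (f h.length x) 1, fun u hu => by
    rw [of_not_not fun hne => hu (if_neg hne)]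
    exact hf _ x⟩

lemma nonrandomized_markovPolicy (f : ℕ → S → C) : Nonrandomized (markovPolicy f) :=
  fun h x => ⟨f h.length x, fun _ => rfl⟩

lemma isMarkov_markovPolicy (f : ℕ → S → C) : IsMarkov (markovPolicy f) :=
  fun h h' x hlen => by
    unfold markovPolicy
    rw [hlen]

lemma saDist_markovPolicy (x : S) (n : ℕ) (z : S) (u : C) :
    saDist q (markovPolicy f) x n z u
      = if u = f n z then sDist q (markovPolicy f) x n z else 0 := by
  have hdec : ∀ h : {l : List (S × C) // l.length = n},
      markovPolicy f h.1 z u = if u = f n z then 1 else 0 := fun h => by rw [markovPolicy, h.2]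
  unfold saDist sDist
  split_ifs with hu
  · exact tsum_congr fun h => by rw [hdec h, if_pos hu, mul_one]
  · exact ENNReal.tsum_eq_zero.2 fun h => by rw [hdec h, if_neg hu, mul_zero]

lemma tsum_saDist_markovPolicy_mul (x : S) (n : ℕ) (z : S) (c : C → ℝ≥0∞) :
    ∑' u, saDist q (markovPolicy f) x n z u * c u
      = sDist q (markovPolicy f) x n z * c (f n z) := by
  rw [tsum_eq_single (f n z) fun u hu => by simp [saDist_markovPolicy, hu]]
  simp [saDist_markovPolicy]

lemma costAt_markovPolicy (x : S) (n : ℕ) (c : S → C → ℝ≥0∞) :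
    costAt q (markovPolicy f) x n c = ∑' z, sDist q (markovPolicy f) x n z * c z (f n z) :=
  tsum_congr fun z => tsum_saDist_markovPolicy_mul x n z (c z)

lemma sDist_markovPolicy_succ (x : S) (n : ℕ) (y : S) :
    sDist q (markovPolicy f) x (n + 1) y
      = ∑' z, sDist q (markovPolicy f) x n z * q z (f n z) y := by
  rw [sDist_succ, ENNReal.tsum_prod']
  exact tsum_congr fun z => tsum_saDist_markovPolicy_mul x n z (fun u => q z u y)

lemma tsum_sDist_markovPolicy_le_one (hq : ∀ x, ∀ u ∈ U x, ∑' x', q x u x' = 1)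
    (hf : ∀ k x, f k x ∈ U x) (x : S) (n : ℕ) :
    ∑' y, sDist q (markovPolicy f) x n y ≤ 1 := by
  induction n with
  | zero => simp [sDist_zero]
  | succ n ih =>
    calc ∑' y, sDist q (markovPolicy f) x (n + 1) y
        = ∑' z, sDist q (markovPolicy f) x n z * ∑' y, q z (f n z) y := by
          simp only [sDist_markovPolicy_succ, ← ENNReal.tsum_mul_left]
          exact ENNReal.tsum_comm
      _ = ∑' z, sDist q (markovPolicy f) x n z := by simp [hq _ _ (hf n _)]
      _ ≤ 1 := ih

variable {V : S → ℝ≥0∞}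

lemma costAt_add_tsum_sDist_succ_le (hq : ∀ x, ∀ u ∈ U x, ∑' x', q x u x' = 1)
    (hf : ∀ k x, f k x ∈ U x) {n : ℕ} {δ : ℝ≥0∞}
    (hV : ∀ z, gPos g z (f n z) + ∑' w, q z (f n z) w * V w ≤ V z + gNeg g z (f n z) + δ)
    (x : S) :
    costAt q (markovPolicy f) x n (gPos g) + ∑' y, sDist q (markovPolicy f) x (n + 1) y * V y
      ≤ ∑' y, sDist q (markovPolicy f) x n y * V y + costAt q (markovPolicy f) x n (gNeg g)
        + δ := by
  set s := sDist q (markovPolicy f) x n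
  have hnext : ∑' y, sDist q (markovPolicy f) x (n + 1) y * V y
      = ∑' z, s z * ∑' w, q z (f n z) w * V w := by
    simp only [sDist_markovPolicy_succ, ← ENNReal.tsum_mul_right, ← ENNReal.tsum_mul_left,
      mul_assoc]
    exact ENNReal.tsum_comm
  calc _ = ∑' z, s z * (gPos g z (f n z) + ∑' w, q z (f n z) w * V w) := by
        rw [costAt_markovPolicy, hnext, ← ENNReal.tsum_add]
        exact tsum_congr fun z => (mul_add _ _ _).symm
    _ ≤ ∑' z, s z * (V z + gNeg g z (f n z) + δ) := by gcongr ∑' z, s z * ?_; exact hV z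
    _ = ∑' z, s z * V z + ∑' z, s z * gNeg g z (f n z) + (∑' z, s z) * δ := by
        simp only [mul_add, ENNReal.tsum_add, ENNReal.tsum_mul_right]
    _ ≤ _ := by
        rw [costAt_markovPolicy]
        gcongr
        exact mul_le_of_le_one_left' (tsum_sDist_markovPolicy_le_one hq hf x n)

lemma sum_costAt_add_tsum_sDist_le (hq : ∀ x, ∀ u ∈ U x, ∑' x', q x u x' = 1)
    (hf : ∀ k x, f k x ∈ U x) {δ : ℕ → ℝ≥0∞}
    (hV : ∀ k z, gPos g z (f k z) + ∑' w, q z (f k z) w * V w ≤ V z + gNeg g z (f k z) + δ k)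
    (x : S) (N : ℕ) :
    ∑ k ∈ Finset.range N, costAt q (markovPolicy f) x k (gPos g)
        + ∑' y, sDist q (markovPolicy f) x N y * V y
      ≤ V x + ∑ k ∈ Finset.range N, costAt q (markovPolicy f) x k (gNeg g)
        + ∑ k ∈ Finset.range N, δ k := by
  induction N with
  | zero => simp [sDist_zero]
  | succ N ih =>
    calc _ = ∑ k ∈ Finset.range N, costAt q (markovPolicy f) x k (gPos g)
          + (costAt q (markovPolicy f) x N (gPos g)
            + ∑' y, sDist q (markovPolicy f) x (N + 1) y * V y) := by
          rw [Finset.sum_range_succ, add_assoc]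
      _ ≤ ∑ k ∈ Finset.range N, costAt q (markovPolicy f) x k (gPos g)
          + (∑' y, sDist q (markovPolicy f) x N y * V y
            + costAt q (markovPolicy f) x N (gNeg g) + δ N) := by
          gcongr _ + ?_
          exact costAt_add_tsum_sDist_succ_le hq hf (hV N) x
      _ = (∑ k ∈ Finset.range N, costAt q (markovPolicy f) x k (gPos g)
            + ∑' y, sDist q (markovPolicy f) x N y * V y)
          + (costAt q (markovPolicy f) x N (gNeg g) + δ N) := by ring
      _ ≤ (V x + ∑ k ∈ Finset.range N, costAt q (markovPolicy f) x k (gNeg g)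
            + ∑ k ∈ Finset.range N, δ k)
          + (costAt q (markovPolicy f) x N (gNeg g) + δ N) := by gcongr
      _ = _ := by simp only [Finset.sum_range_succ]; ring

lemma Jplus_markovPolicy_le (hq : ∀ x, ∀ u ∈ U x, ∑' x', q x u x' = 1)
    (hf : ∀ k x, f k x ∈ U x) {δ : ℕ → ℝ≥0∞}
    (hV : ∀ k z, gPos g z (f k z) + ∑' w, q z (f k z) w * V w ≤ V z + gNeg g z (f k z) + δ k)
    (x : S) :
    Jplus q g (markovPolicy f) x ≤ V x + Jminus q g (markovPolicy f) x + ∑' k, δ k := by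
  rw [Jplus, ENNReal.tsum_eq_iSup_nat]
  refine iSup_le fun N => ?_
  calc _ ≤ _ := le_self_add
    _ ≤ _ := sum_costAt_add_tsum_sDist_le hq hf hV x N
    _ ≤ _ := by gcongr <;> exact ENNReal.sum_le_tsum _

lemma Jpol_markovPolicy_le (hq : ∀ x, ∀ u ∈ U x, ∑' x', q x u x' = 1) (hGC : GC U q g)
    (hf : ∀ k x, f k x ∈ U x) {δ : ℕ → ℝ≥0∞}
    (hV : ∀ k z, gPos g z (f k z) + ∑' w, q z (f k z) w * V w ≤ V z + gNeg g z (f k z) + δ k)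
    (x : S) :
    Jpol q g (markovPolicy f) x ≤ ((V x + ∑' k, δ k : ℝ≥0∞) : EReal) :=
  (signedSum_le_coe_iff (Jminus_ne_top hGC (isPolicy_markovPolicy hf) x)).2 <| by
    rw [add_right_comm]
    exact Jplus_markovPolicy_le hq hf hV x

end Markov

theorem exists_eps_optimal_markov_and_optimal_stationary_general {S C : Type}
    (U : S → Set C) (q : S → C → S → ℝ≥0∞) (g : S → C → EReal)
    (hU : ∀ x, (U x).Nonempty)
    (hq : ∀ x, ∀ u ∈ U x, (∑' x' : S, q x u x') = 1)
    (hGC : GC U q g)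
    (hpos : ∀ x : S, 0 ≤ Jstar U q g x) :
    (∀ ε : ℝ, 0 < ε → ∃ π : Policy S C, IsPolicy U π ∧ Nonrandomized π ∧ IsMarkov π ∧
      ∀ x : S, Jpol q g π x ≤ Jstar U q g x + (ε : EReal)) ∧
    ((∀ x : S, ∃ π : Policy S C, IsPolicy U π ∧ Jpol q g π x = Jstar U q g x) →
      ∃ μ : S → C → ℝ≥0∞, IsPolicy U (toPolicy μ) ∧ Nonrandomized (toPolicy μ) ∧
        ∀ x : S, Jpol q g (toPolicy μ) x = Jstar U q g x) := by
  refine ⟨fun ε hε => ?_, fun hopt => ?_⟩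
  · obtain ⟨δ, hδpos, hδsum⟩ :=
      ENNReal.exists_pos_sum_of_countable (ENNReal.ofReal_pos.2 hε).ne' ℕ
    choose f hfU hf using fun k z =>
      exists_conserving_control hU hGC hpos z (δ := δ k) fun h => absurd h (hδpos k).ne'
    refine ⟨markovPolicy f, isPolicy_markovPolicy hfU, nonrandomized_markovPolicy f,
      isMarkov_markovPolicy f, fun x => ?_⟩
    calc Jpol q g (markovPolicy f) x
        ≤ ((ePos (Jstar U q g x) + ∑' k, (δ k : ℝ≥0∞) : ℝ≥0∞) : EReal) :=
          Jpol_markovPolicy_le hq hGC hfU hf x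
      _ ≤ ((ePos (Jstar U q g x) + ENNReal.ofReal ε : ℝ≥0∞) : EReal) :=
          EReal.coe_ennreal_le_coe_ennreal_iff.2 (by gcongr)
      _ = Jstar U q g x + ε := by
          rw [EReal.coe_ennreal_add, ePos_eq_toENNReal, EReal.coe_toENNReal (hpos x),
            EReal.coe_ennreal_ofReal, max_eq_left hε.le]
  · choose μ hμU hμ using fun z =>
      exists_conserving_control hU hGC hpos z (δ := 0) fun _ => hopt z
    have hμ_eq : toPolicy (fun x u => if u = μ x then 1 else 0) = markovPolicy fun _ => μ := rfl
    refine ⟨fun x u => if u = μ x then 1 else 0, hμ_eq ▸ isPolicy_markovPolicy fun _ => hμU,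
      hμ_eq ▸ nonrandomized_markovPolicy _, fun x => ?_⟩
    rw [hμ_eq]
    refine le_antisymm ?_ (Jstar_le_Jpol (isPolicy_markovPolicy fun _ => hμU) x)
    simpa [ePos_eq_toENNReal, EReal.coe_toENNReal (hpos x)] using
      Jpol_markovPolicy_le hq hGC (fun _ => hμU) (fun _ => hμ) x

/-- if `J* ≥ 0`, then `ε`-optimal nonrandomized Markov policies
exist; and if moreover every state admits an optimal policy, then a
nonrandomized stationary optimal policy exists. -/
theorem exists_eps_optimal_markov_and_optimal_stationary {S C : Type} [Countable S] [Countable C]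
    (U : S → Set C) (q : S → C → S → ℝ≥0∞) (g : S → C → EReal)
    (hU : ∀ x, (U x).Nonempty)
    (hg : ∀ x, ∀ u ∈ U x, g x u ≠ ⊥)
    (hq : ∀ x, ∀ u ∈ U x, (∑' x' : S, q x u x') = 1)
    (hGC : GC U q g)
    (hpos : ∀ x : S, 0 ≤ Jstar U q g x) :
    (∀ ε : ℝ, 0 < ε → ∃ π : Policy S C, IsPolicy U π ∧ Nonrandomized π ∧ IsMarkov π ∧
      ∀ x : S, Jpol q g π x ≤ Jstar U q g x + (ε : EReal)) ∧
    ((∀ x : S, ∃ π : Policy S C, IsPolicy U π ∧ Jpol q g π x = Jstar U q g x) →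
      ∃ μ : S → C → ℝ≥0∞, IsPolicy U (toPolicy μ) ∧ Nonrandomized (toPolicy μ) ∧
        ∀ x : S, Jpol q g (toPolicy μ) x = Jstar U q g x) :=
  exists_eps_optimal_markov_and_optimal_stationary_general U q g hU hq hGC hpos

end GCMDP

end
end

section
/- For any state x, any policy π, and any n ≥ 0: E^π_x[Σ_{k≥n} g(x_k,u_k)] ≥ E^π_x[J*(x_n)] and E^π_x[Σ_{k≥n} g₋(x_k,u_k)] ≥ E^π_x[J^{*-}(x_n)]. -/
/-!
Common framework: countable-state/countable-control total-cost MDPs under the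
General Convergence (GC) condition, following H. Yu, "On Convergence of Value
Iteration for a Class of Total Cost Markov Decision Processes".

States `S` and controls `C` are countable types; `U x` is the nonempty set of
feasible controls at `x`; `g x u ∈ (-∞, +∞]` is the one-stage cost (an `EReal`
that is never `⊥` on feasible pairs); `q x u x'` are transition probabilities.

A policy is represented by its conditional control distributions given the
(reversed) history of past (state, control) pairs and the current state.
Expectations are computed by explicit countable sums, splitting every
extended-real quantity into its positive and negative parts (computed in
`ℝ≥0∞`) and recombining with the convention `∞ - ∞ = ∞`.
-/

open scoped ENNReal Classical
open Filter

noncomputable section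

namespace GCMDP

variable {S C : Type}

/-! ### Auxiliary lemmas -/

lemma ePos_mono {a b : EReal} (h : a ≤ b) : ePos a ≤ ePos b := by
  unfold ePos
  by_cases hb : b = ⊤
  · simp [hb]
  · have ha : a ≠ ⊤ := fun ha => hb (top_le_iff.mp (ha ▸ h))
    rw [if_neg ha, if_neg hb]
    by_cases ha' : a = ⊥
    · simp [ha']
    · exact ENNReal.ofReal_le_ofReal (EReal.toReal_le_toReal h ha' hb)

lemma coe_ennreal_eq {p : ℝ≥0∞} (hp : p ≠ ⊤) : (p : EReal) = ((p.toReal : ℝ) : EReal) := by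
  rw [← EReal.toReal_coe_ennreal (x := p)]
  exact (EReal.coe_toReal (by simpa using hp) (EReal.coe_ennreal_ne_bot p)).symm

lemma ePos_coe (r : ℝ) : ePos (r : EReal) = ENNReal.ofReal r := by
  simp [ePos]

lemma ofReal_max_zero (r : ℝ) : ENNReal.ofReal (max r 0) = ENNReal.ofReal r := by
  rcases le_total r 0 with h | h
  · simp [max_eq_right h, ENNReal.ofReal_eq_zero.mpr h]
  · simp [max_eq_left h]

lemma ePos_signedSum_le (p m : ℝ≥0∞) : ePos (signedSum p m) ≤ p := by
  unfold signedSum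
  by_cases hp : p = ⊤
  · simp [hp, ePos]
  rw [if_neg hp]
  by_cases hm : m = ⊤
  · rw [hm, EReal.coe_ennreal_top, EReal.sub_top]
    simp [ePos]
  · rw [coe_ennreal_eq hp, coe_ennreal_eq hm, ← EReal.coe_sub, ePos_coe]
    calc ENNReal.ofReal (p.toReal - m.toReal) ≤ ENNReal.ofReal p.toReal :=
          ENNReal.ofReal_le_ofReal (by simp [ENNReal.toReal_nonneg])
      _ = p := ENNReal.ofReal_toReal hp

lemma le_signedSum_key {x : EReal} {p m : ℝ≥0∞} (hm : m ≠ ⊤)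
    (h : x ≤ signedSum p m) : ePos x + m ≤ p + ePos (-x) := by
  unfold signedSum at h
  by_cases hp : p = ⊤
  · simp [hp]
  rw [if_neg hp, coe_ennreal_eq hp, coe_ennreal_eq hm, ← EReal.coe_sub] at h
  induction x with
  | bot => simp [ePos]
  | top =>
    exact absurd (top_le_iff.mp h) (EReal.coe_ne_top _)
  | coe r =>
    rw [← EReal.coe_neg, ePos_coe, ePos_coe]
    rw [EReal.coe_le_coe_iff] at h
    have hm' : m = ENNReal.ofReal m.toReal := (ENNReal.ofReal_toReal hm).symm
    have hp' : p = ENNReal.ofReal p.toReal := (ENNReal.ofReal_toReal hp).symm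
    rw [hm', hp']
    rw [← ofReal_max_zero r, ← ofReal_max_zero (-r),
      ← ENNReal.ofReal_add (le_max_right _ _) ENNReal.toReal_nonneg,
      ← ENNReal.ofReal_add ENNReal.toReal_nonneg (le_max_right _ _)]
    exact ENNReal.ofReal_le_ofReal (by rcases le_total r 0 with h0 | h0 <;>
      [ (rw [max_eq_right h0, max_eq_left (by linarith)]);
        (rw [max_eq_left h0, max_eq_right (by linarith)])] <;> linarith)

lemma signedSum_le_signedSum {A B P N : ℝ≥0∞} (hN : N ≠ ⊤) (hAP : A ≤ P)
    (h : A + N ≤ P + B) : signedSum A B ≤ signedSum P N := by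
  unfold signedSum
  by_cases hP : P = ⊤
  · simp [hP]
  have hA : A ≠ ⊤ := fun hA => hP (top_le_iff.mp (hA ▸ hAP))
  rw [if_neg hP, if_neg hA]
  by_cases hB : B = ⊤
  · rw [hB, EReal.coe_ennreal_top, EReal.sub_top]; exact bot_le
  · rw [coe_ennreal_eq hP, coe_ennreal_eq hN, coe_ennreal_eq hA, coe_ennreal_eq hB,
      ← EReal.coe_sub, ← EReal.coe_sub, EReal.coe_le_coe_iff]
    have := (ENNReal.toReal_le_toReal (by finiteness) (by finiteness)).mpr h
    rw [ENNReal.toReal_add hA hN, ENNReal.toReal_add hP hB] at this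
    linarith

/-- The shifted policy: the behavior of `π` after an initial (reversed) history `h`. -/
def shiftPol (π : Policy S C) (h : List (S × C)) : Policy S C :=
  fun h' z u => π (h' ++ h) z u

lemma shiftPol_isPolicy {U : S → Set C} {π : Policy S C} (hπ : IsPolicy U π)
    (h : List (S × C)) : IsPolicy U (shiftPol π h) :=
  fun h' x => hπ (h' ++ h) x

lemma histProb_append (q : S → C → S → ℝ≥0∞) (π : Policy S C) (x₀ : S)
    (h h' : List (S × C)) (z : S) :
    histProb q π x₀ (h' ++ h) z
      = ∑' y : S, histProb q π x₀ h y * histProb q (shiftPol π h) y h' z := by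
  induction h' generalizing z with
  | nil =>
    simp only [List.nil_append, histProb]
    rw [tsum_eq_single z (fun y hy => by rw [if_neg (Ne.symm hy), mul_zero])]
    rw [if_pos rfl, mul_one]
  | cons p t ih =>
    obtain ⟨w, u⟩ := p
    simp only [List.cons_append, histProb, List.append_eq]
    rw [ih w, ← ENNReal.tsum_mul_right, ← ENNReal.tsum_mul_right]
    exact tsum_congr fun y => by
      show _ = histProb q π x₀ h y * (histProb q (shiftPol π h) y t w * π (t ++ h) w u * q w u z)
      ring

/-- Splitting a list of length `n + m` into its last `n` elements and first `m` elements. -/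
def splitEquiv (S C : Type) (n m : ℕ) :
    {l : List (S × C) // l.length = n + m}
      ≃ ({l : List (S × C) // l.length = m} × {l : List (S × C) // l.length = n}) where
  toFun l := (⟨l.1.take m, by rw [List.length_take, l.2]; omega⟩,
    ⟨l.1.drop m, by rw [List.length_drop, l.2]; omega⟩)
  invFun p := ⟨p.1.1 ++ p.2.1, by rw [List.length_append, p.1.2, p.2.2, Nat.add_comm]⟩
  left_inv l := Subtype.ext (List.take_append_drop _ _)
  right_inv p := Prod.ext (Subtype.ext (List.take_left' p.1.2)) (Subtype.ext (List.drop_left' p.1.2))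

lemma tsum_len_split (F : List (S × C) → ℝ≥0∞) (n m : ℕ) :
    ∑' H : {l : List (S × C) // l.length = n + m}, F H.1
      = ∑' h' : {l : List (S × C) // l.length = m},
          ∑' h : {l : List (S × C) // l.length = n}, F (h'.1 ++ h.1) := by
  rw [← Equiv.tsum_eq (splitEquiv S C n m).symm (fun H => F H.1), ENNReal.tsum_prod']
  rfl

lemma saDist_decomp (q : S → C → S → ℝ≥0∞) (π : Policy S C) (x : S) (n m : ℕ)
    (z : S) (u : C) :
    saDist q π x (n + m) z u
      = ∑' h : {l : List (S × C) // l.length = n}, ∑' y : S,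
          histProb q π x h.1 y * saDist q (shiftPol π h.1) y m z u := by
  calc saDist q π x (n + m) z u
      = ∑' h' : {l : List (S × C) // l.length = m},
          ∑' h : {l : List (S × C) // l.length = n},
            histProb q π x (h'.1 ++ h.1) z * π (h'.1 ++ h.1) z u := by
        rw [saDist]; exact tsum_len_split (fun H => histProb q π x H z * π H z u) n m
    _ = ∑' h : {l : List (S × C) // l.length = n},
          ∑' h' : {l : List (S × C) // l.length = m},
            histProb q π x (h'.1 ++ h.1) z * π (h'.1 ++ h.1) z u := ENNReal.tsum_comm
    _ = ∑' h : {l : List (S × C) // l.length = n},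
          ∑' h' : {l : List (S × C) // l.length = m}, ∑' y : S,
            histProb q π x h.1 y * histProb q (shiftPol π h.1) y h'.1 z
              * π (h'.1 ++ h.1) z u :=
        tsum_congr fun h => tsum_congr fun h' => by
          rw [histProb_append q π x h.1 h'.1 z, ← ENNReal.tsum_mul_right]
    _ = ∑' h : {l : List (S × C) // l.length = n}, ∑' y : S,
          ∑' h' : {l : List (S × C) // l.length = m},
            histProb q π x h.1 y * histProb q (shiftPol π h.1) y h'.1 z
              * π (h'.1 ++ h.1) z u := tsum_congr fun h => ENNReal.tsum_comm
    _ = ∑' h : {l : List (S × C) // l.length = n}, ∑' y : S,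
          histProb q π x h.1 y * ∑' h' : {l : List (S × C) // l.length = m},
            histProb q (shiftPol π h.1) y h'.1 z * shiftPol π h.1 h'.1 z u :=
        tsum_congr fun h => tsum_congr fun y => by
          rw [← ENNReal.tsum_mul_left]
          exact tsum_congr fun h' => mul_assoc _ _ _
    _ = _ := rfl

lemma tsum_pair {α β : Type} (f : α → β → ℝ≥0∞) :
    ∑' a : α, ∑' b : β, f a b = ∑' w : α × β, f w.1 w.2 :=
  (ENNReal.tsum_prod' (f := fun w => f w.1 w.2)).symm

lemma costAt_decomp (q : S → C → S → ℝ≥0∞) (π : Policy S C) (x : S) (n m : ℕ)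
    (f : S → C → ℝ≥0∞) :
    costAt q π x (n + m) f
      = ∑' h : {l : List (S × C) // l.length = n}, ∑' y : S,
          histProb q π x h.1 y * costAt q (shiftPol π h.1) y m f := by
  rw [costAt, tsum_pair (f := fun z u => saDist q π x (n + m) z u * f z u)]
  calc ∑' p : S × C, saDist q π x (n + m) p.1 p.2 * f p.1 p.2
      = ∑' p : S × C, ∑' w : {l : List (S × C) // l.length = n} × S,
          histProb q π x w.1.1 w.2 * saDist q (shiftPol π w.1.1) w.2 m p.1 p.2
            * f p.1 p.2 :=
        tsum_congr fun p => by
          rw [saDist_decomp q π x n m p.1 p.2, tsum_pair (f := fun (h : {l : List (S × C) // l.length = n}) (y : S) =>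
              histProb q π x h.1 y * saDist q (shiftPol π h.1) y m p.1 p.2),
            ← ENNReal.tsum_mul_right]
    _ = ∑' w : {l : List (S × C) // l.length = n} × S, ∑' p : S × C,
          histProb q π x w.1.1 w.2 * saDist q (shiftPol π w.1.1) w.2 m p.1 p.2
            * f p.1 p.2 := ENNReal.tsum_comm
    _ = ∑' w : {l : List (S × C) // l.length = n} × S,
          histProb q π x w.1.1 w.2 * costAt q (shiftPol π w.1.1) w.2 m f :=
        tsum_congr fun w => by
          rw [costAt, tsum_pair (f := fun z u =>
              saDist q (shiftPol π w.1.1) w.2 m z u * f z u),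
            ← ENNReal.tsum_mul_left]
          exact tsum_congr fun p => mul_assoc _ _ _
    _ = _ := (tsum_pair (f := fun (h : {l : List (S × C) // l.length = n}) (y : S) =>
          histProb q π x h.1 y * costAt q (shiftPol π h.1) y m f)).symm

lemma tail_decomp (q : S → C → S → ℝ≥0∞) (π : Policy S C) (x : S) (n : ℕ)
    (f : S → C → ℝ≥0∞) :
    (∑' k : ℕ, costAt q π x (n + k) f)
      = ∑' h : {l : List (S × C) // l.length = n}, ∑' y : S,
          histProb q π x h.1 y * ∑' k : ℕ, costAt q (shiftPol π h.1) y k f := by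
  calc (∑' k : ℕ, costAt q π x (n + k) f)
      = ∑' k : ℕ, ∑' w : {l : List (S × C) // l.length = n} × S,
          histProb q π x w.1.1 w.2 * costAt q (shiftPol π w.1.1) w.2 k f :=
        tsum_congr fun k => by
          rw [costAt_decomp q π x n k f, tsum_pair (f := fun (h : {l : List (S × C) // l.length = n}) (y : S) =>
            histProb q π x h.1 y * costAt q (shiftPol π h.1) y k f)]
    _ = ∑' w : {l : List (S × C) // l.length = n} × S, ∑' k : ℕ,
          histProb q π x w.1.1 w.2 * costAt q (shiftPol π w.1.1) w.2 k f :=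
        ENNReal.tsum_comm
    _ = ∑' w : {l : List (S × C) // l.length = n} × S,
          histProb q π x w.1.1 w.2 * ∑' k : ℕ, costAt q (shiftPol π w.1.1) w.2 k f :=
        tsum_congr fun w => ENNReal.tsum_mul_left
    _ = _ := (tsum_pair (f := fun (h : {l : List (S × C) // l.length = n}) (y : S) =>
          histProb q π x h.1 y * ∑' k : ℕ, costAt q (shiftPol π h.1) y k f)).symm

lemma sDist_decomp (q : S → C → S → ℝ≥0∞) (π : Policy S C) (x : S) (n : ℕ)
    (c : S → ℝ≥0∞) :
    (∑' y : S, sDist q π x n y * c y)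
      = ∑' h : {l : List (S × C) // l.length = n}, ∑' y : S,
          histProb q π x h.1 y * c y := by
  rw [ENNReal.tsum_comm]
  exact tsum_congr fun y => by rw [sDist, ENNReal.tsum_mul_right]

/-- the expected tail cost from time `n` dominates
`E^π_x[J*(x_n)]`, and the expected negative tail dominates `E^π_x[J^{*-}(x_n)]`. -/
theorem tail_cost_lower_bounds {S C : Type} [Countable S] [Countable C]
    (U : S → Set C) (q : S → C → S → ℝ≥0∞) (g : S → C → EReal)
    (hU : ∀ x, (U x).Nonempty)
    (hg : ∀ x, ∀ u ∈ U x, g x u ≠ ⊥)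
    (hq : ∀ x, ∀ u ∈ U x, (∑' x' : S, q x u x') = 1)
    (hGC : GC U q g) :
    ∀ (x : S) (π : Policy S C), IsPolicy U π → ∀ n : ℕ,
      expState q π x n (Jstar U q g) ≤ tailCost q g π x n ∧
      (∑' y : S, sDist q π x n y * JstarMinus U q g y) ≤
        ∑' k : ℕ, costAt q π x (n + k) (gNeg g) := by
  intro x π hπ n
  -- the shifted policies are valid policies
  have hmem : ∀ h : {l : List (S × C) // l.length = n},
      shiftPol π h.1 ∈ {π' : Policy S C | IsPolicy U π'} :=
    fun h => shiftPol_isPolicy hπ h.1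
  -- the negative cost of any shifted policy is finite by (GC)
  have hmt : ∀ (h : {l : List (S × C) // l.length = n}) (y : S),
      Jminus q g (shiftPol π h.1) y ≠ ⊤ := by
    intro h y
    have hle : Jminus q g (shiftPol π h.1) y
        ≤ ⨆ π' ∈ {π'' : Policy S C | IsPolicy U π''}, Jminus q g π' y :=
      le_iSup₂ (f := fun π' (_ : π' ∈ {π'' : Policy S C | IsPolicy U π''}) =>
        Jminus q g π' y) (shiftPol π h.1) (hmem h)
    exact (lt_of_le_of_lt hle (lt_top_iff_ne_top.mpr (hGC y))).ne
  -- J* is dominated by the cost of each shifted policy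
  have hJle : ∀ (h : {l : List (S × C) // l.length = n}) (y : S),
      Jstar U q g y ≤ Jpol q g (shiftPol π h.1) y :=
    fun h y => iInf₂_le (shiftPol π h.1) (hmem h)
  have hJle' : ∀ (h : {l : List (S × C) // l.length = n}) (y : S),
      Jstar U q g y ≤ signedSum (Jplus q g (shiftPol π h.1) y)
        (Jminus q g (shiftPol π h.1) y) := hJle
  -- pointwise key inequalities
  have key : ∀ (h : {l : List (S × C) // l.length = n}) (y : S),
      ePos (Jstar U q g y) + Jminus q g (shiftPol π h.1) y
        ≤ Jplus q g (shiftPol π h.1) y + ePos (-(Jstar U q g y)) :=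
    fun h y => le_signedSum_key (hmt h y) (hJle' h y)
  have ale : ∀ (h : {l : List (S × C) // l.length = n}) (y : S),
      ePos (Jstar U q g y) ≤ Jplus q g (shiftPol π h.1) y :=
    fun h y => le_trans (ePos_mono (hJle' h y)) (ePos_signedSum_le _ _)
  -- sum decompositions
  have hP : (∑' k : ℕ, costAt q π x (n + k) (gPos g))
      = ∑' h : {l : List (S × C) // l.length = n}, ∑' y : S,
          histProb q π x h.1 y * Jplus q g (shiftPol π h.1) y :=
    tail_decomp q π x n (gPos g)
  have hN : (∑' k : ℕ, costAt q π x (n + k) (gNeg g))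
      = ∑' h : {l : List (S × C) // l.length = n}, ∑' y : S,
          histProb q π x h.1 y * Jminus q g (shiftPol π h.1) y :=
    tail_decomp q π x n (gNeg g)
  -- finiteness of the negative tail
  have hNtop : (∑' k : ℕ, costAt q π x (n + k) (gNeg g)) ≠ ⊤ := by
    intro heq
    apply hGC x
    have h1 : (∑' k : ℕ, costAt q π x (n + k) (gNeg g)) ≤ Jminus q g π x :=
      ENNReal.tsum_comp_le_tsum_of_injective (add_right_injective n)
        (fun k => costAt q π x k (gNeg g))
    have h2 : Jminus q g π x
        ≤ ⨆ π' ∈ {π'' : Policy S C | IsPolicy U π''}, Jminus q g π' x :=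
      le_iSup₂ (f := fun π' (_ : π' ∈ {π'' : Policy S C | IsPolicy U π''}) =>
        Jminus q g π' x) π hπ
    exact top_le_iff.mp (heq ▸ (h1.trans h2))
  constructor
  · -- first inequality
    rw [expState, tailCost]
    apply signedSum_le_signedSum hNtop
    · calc (∑' y : S, sDist q π x n y * ePos (Jstar U q g y))
          = ∑' h : {l : List (S × C) // l.length = n}, ∑' y : S,
              histProb q π x h.1 y * ePos (Jstar U q g y) :=
            sDist_decomp q π x n _
        _ ≤ ∑' h : {l : List (S × C) // l.length = n}, ∑' y : S,
              histProb q π x h.1 y * Jplus q g (shiftPol π h.1) y :=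
            ENNReal.tsum_le_tsum fun h => ENNReal.tsum_le_tsum fun y =>
              mul_le_mul_right (ale h y) _
        _ = _ := hP.symm
    · calc (∑' y : S, sDist q π x n y * ePos (Jstar U q g y))
            + ∑' k : ℕ, costAt q π x (n + k) (gNeg g)
          = (∑' h : {l : List (S × C) // l.length = n}, ∑' y : S,
              histProb q π x h.1 y * ePos (Jstar U q g y))
            + ∑' h : {l : List (S × C) // l.length = n}, ∑' y : S,
              histProb q π x h.1 y * Jminus q g (shiftPol π h.1) y := by
            rw [sDist_decomp q π x n _, hN]
        _ = ∑' h : {l : List (S × C) // l.length = n}, ∑' y : S,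
              (histProb q π x h.1 y * ePos (Jstar U q g y)
                + histProb q π x h.1 y * Jminus q g (shiftPol π h.1) y) := by
            rw [← ENNReal.tsum_add]
            exact tsum_congr fun h => (ENNReal.tsum_add).symm
        _ = ∑' h : {l : List (S × C) // l.length = n}, ∑' y : S,
              histProb q π x h.1 y
                * (ePos (Jstar U q g y) + Jminus q g (shiftPol π h.1) y) :=
            tsum_congr fun h => tsum_congr fun y => (mul_add _ _ _).symm
        _ ≤ ∑' h : {l : List (S × C) // l.length = n}, ∑' y : S,
              histProb q π x h.1 y
                * (Jplus q g (shiftPol π h.1) y + ePos (-(Jstar U q g y))) :=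
            ENNReal.tsum_le_tsum fun h => ENNReal.tsum_le_tsum fun y =>
              mul_le_mul_right (key h y) _
        _ = ∑' h : {l : List (S × C) // l.length = n}, ∑' y : S,
              (histProb q π x h.1 y * Jplus q g (shiftPol π h.1) y
                + histProb q π x h.1 y * ePos (-(Jstar U q g y))) :=
            tsum_congr fun h => tsum_congr fun y => mul_add _ _ _
        _ = (∑' k : ℕ, costAt q π x (n + k) (gPos g))
            + ∑' y : S, sDist q π x n y * ePos (-(Jstar U q g y)) := by
            rw [hP, sDist_decomp q π x n _, ← ENNReal.tsum_add]
            exact tsum_congr fun h => ENNReal.tsum_add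
  · -- second inequality
    rw [sDist_decomp q π x n _, hN]
    exact ENNReal.tsum_le_tsum fun h => ENNReal.tsum_le_tsum fun y =>
      mul_le_mul_right (iInf₂_le (shiftPol π h.1) (hmem h)) _

end GCMDP

end
end
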